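/- arXiv:1305.2218 — 2 statements merged into one kernel-verified Lean document; each statement's English description precedes it below -/
import Mathlib

section
/- Let f : ℝᵈ → ℝ be L-smooth and μ-strongly convex with gradient g, X ⊆ ℝᵈ nonempty closed convex, and x* a minimizer of f over X. Fix x_{t−1} ∈ X, a vector δ ∈ ℝᵈ with ‖δ‖ ≤ Q, set ĝ = g(x_{t−1}) + δ, and let x_t = argmin_{x∈X}{⟨ĝ, x⟩ + (1/(2γ))‖x − x_{t−1}‖²} with 0 < γ and γL < 1. Then f(x_t) − f(x*) ≤ ((1−γμ)/(2γ))‖x_{t−1}−x*‖² − (1/(2γ))‖x_t−x*‖² − ⟨δ, x_{t−1}−x*⟩ + (γ/(2(1−γL)))‖δ‖². -/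
/-!
Smoothness at `xprev` bounds `f xt` from above and strong convexity bounds `f xstar` from below,
leaving `⟪g xprev, xt - xstar⟫`. The first-order optimality condition of the proximal step, read
through the three-point identity, bounds `⟪ghat, xt - xstar⟫` by squared distances. The noise `δ`
contributes `-⟪δ, xprev - xstar⟫` and `‖δ‖ * ‖xt - xprev‖`, and Young's inequality absorbs the latter
into the leftover `-(1 - γ L) / (2 γ) * ‖xt - xprev‖ ^ 2`.
-/

open scoped RealInnerProductSpace

section InnerProductSpace

variable {E : Type*} [NormedAddCommGroup E] [InnerProductSpace ℝ E]

theorem IsMinOn.hasFDerivAt_nonneg_of_convex {s : Set E} {f : E → ℝ} {f' : E →L[ℝ] ℝ} {a y : E}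
    (h : IsMinOn f s a) (hf : HasFDerivAt f f' a) (hs : Convex ℝ s) (ha : a ∈ s) (hy : y ∈ s) :
    0 ≤ f' (y - a) :=
  h.localize.hasFDerivWithinAt_nonneg hf.hasFDerivWithinAt
    (sub_mem_posTangentConeAt_of_segment_subset (hs.segment_subset ha hy))

theorem inner_le_of_isMinOn_inner_add_norm_sub_sq {s : Set E} {v p x y : E} {c : ℝ}
    (hx : IsMinOn (fun z => ⟪v, z⟫ + c * ‖z - p‖ ^ 2) s x) (hs : Convex ℝ s) (hxs : x ∈ s)
    (hy : y ∈ s) :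
    ⟪v, x - y⟫ ≤ c * (‖p - y‖ ^ 2 - ‖x - p‖ ^ 2 - ‖x - y‖ ^ 2) := by
  have hderiv : HasFDerivAt (fun z => ⟪v, z⟫ + c * ‖z - p‖ ^ 2)
      (innerSL ℝ v + c • 2 • (innerSL ℝ (x - p)).comp (ContinuousLinearMap.id ℝ E)) x :=
    (innerSL ℝ v).hasFDerivAt.add (((hasFDerivAt_id x).sub_const p).norm_sq.const_mul c)
  have hvi := hx.hasFDerivAt_nonneg_of_convex hderiv hs hxs hy
  have hpolar : ‖y - p‖ ^ 2 = ‖x - p‖ ^ 2 + 2 * ⟪x - p, y - x⟫ + ‖y - x‖ ^ 2 := by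
    rw [← norm_add_sq_real, sub_add_sub_cancel']
  simp only [add_apply, innerSL_apply_apply, smul_apply,
    ContinuousLinearMap.comp_apply, ContinuousLinearMap.id_apply, smul_eq_mul, nsmul_eq_mul,
    Nat.cast_ofNat] at hvi
  rw [norm_sub_rev p y, norm_sub_rev x y, ← neg_sub y x, inner_neg_right, hpolar]
  linarith

end InnerProductSpace

theorem mul_sub_half_mul_sq_le {a b c : ℝ} (hc : 0 < c) :
    b * a - c / 2 * a ^ 2 ≤ b ^ 2 / (2 * c) := by
  rw [le_div_iff₀ (by positivity)]
  nlinarith [sq_nonneg (c * a - b)]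

theorem sgd_one_step_general (d : ℕ)
    (f : EuclideanSpace ℝ (Fin d) → ℝ) (g : EuclideanSpace ℝ (Fin d) → EuclideanSpace ℝ (Fin d))
    (L μ : ℝ)
    (hsmooth : ∀ x y, f y ≤ f x + inner ℝ (g x) (y - x) + L / 2 * ‖y - x‖ ^ 2)
    (hsc : ∀ x y, f y ≥ f x + inner ℝ (g x) (y - x) + μ / 2 * ‖y - x‖ ^ 2)
    (X : Set (EuclideanSpace ℝ (Fin d)))
    (hconv : Convex ℝ X)
    (xstar : EuclideanSpace ℝ (Fin d)) (hxstar : xstar ∈ X)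
    (xprev : EuclideanSpace ℝ (Fin d))
    (δ : EuclideanSpace ℝ (Fin d))
    (ghat : EuclideanSpace ℝ (Fin d)) (hghat : ghat = g xprev + δ)
    (γ : ℝ) (hγ : 0 < γ) (hγL : γ * L < 1)
    (xt : EuclideanSpace ℝ (Fin d)) (hxt : xt ∈ X)
    (hargmin : ∀ x ∈ X,
      inner ℝ ghat xt + 1 / (2 * γ) * ‖xt - xprev‖ ^ 2 ≤
        inner ℝ ghat x + (1 / (2 * γ) * ‖x - xprev‖ ^ 2 : ℝ)) :
    f xt - f xstar ≤
      (1 - γ * μ) / (2 * γ) * ‖xprev - xstar‖ ^ 2 -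
        1 / (2 * γ) * ‖xt - xstar‖ ^ 2 -
        inner ℝ δ (xprev - xstar) + γ / (2 * (1 - γ * L)) * ‖δ‖ ^ 2 := by
  have descent : f xt - f xstar ≤
      ⟪g xprev, xt - xstar⟫ + L / 2 * ‖xt - xprev‖ ^ 2 - μ / 2 * ‖xprev - xstar‖ ^ 2 := by
    have := hsmooth xprev xt
    have := hsc xprev xstar
    rw [← sub_sub_sub_cancel_right xt xstar xprev, inner_sub_right, norm_sub_rev xprev]
    linarith
  have prox := inner_le_of_isMinOn_inner_add_norm_sub_sq hargmin hconv hxt hxstar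
  rw [hghat, inner_add_left] at prox
  have noise : -⟪δ, xt - xstar⟫ ≤ -⟪δ, xprev - xstar⟫ + ‖δ‖ * ‖xt - xprev‖ := by
    rw [← sub_add_sub_cancel xt xprev xstar, inner_add_right]
    linarith [neg_le_of_abs_le (abs_real_inner_le_norm δ (xt - xprev))]
  have young := mul_sub_half_mul_sq_le (a := ‖xt - xprev‖) (b := ‖δ‖)
    (div_pos (sub_pos.2 hγL) hγ)
  have hγ0 := hγ.ne'
  have h1L := (sub_pos.2 hγL).ne'
  rw [show (1 - γ * L) / γ / 2 = 1 / (2 * γ) - L / 2 by field_simp,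
    show ‖δ‖ ^ 2 / (2 * ((1 - γ * L) / γ)) = γ / (2 * (1 - γ * L)) * ‖δ‖ ^ 2 by field_simp] at young
  rw [show (1 - γ * μ) / (2 * γ) = 1 / (2 * γ) - μ / 2 by field_simp]
  linarith

theorem sgd_one_step (d : ℕ)
    (f : EuclideanSpace ℝ (Fin d) → ℝ) (g : EuclideanSpace ℝ (Fin d) → EuclideanSpace ℝ (Fin d))
    (L μ Q : ℝ) (hL : 0 < L) (hμ : 0 < μ) (hQ : 0 < Q)
    (hsmooth : ∀ x y, f y ≤ f x + inner ℝ (g x) (y - x) + L / 2 * ‖y - x‖ ^ 2)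
    (hsc : ∀ x y, f y ≥ f x + inner ℝ (g x) (y - x) + μ / 2 * ‖y - x‖ ^ 2)
    (X : Set (EuclideanSpace ℝ (Fin d))) (hne : X.Nonempty) (hX : IsClosed X)
    (hconv : Convex ℝ X)
    (xstar : EuclideanSpace ℝ (Fin d)) (hxstar : xstar ∈ X)
    (hmin : ∀ y ∈ X, f xstar ≤ f y)
    (xprev : EuclideanSpace ℝ (Fin d)) (hxprev : xprev ∈ X)
    (δ : EuclideanSpace ℝ (Fin d)) (hδ : ‖δ‖ ≤ Q)
    (ghat : EuclideanSpace ℝ (Fin d)) (hghat : ghat = g xprev + δ)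
    (γ : ℝ) (hγ : 0 < γ) (hγL : γ * L < 1)
    (xt : EuclideanSpace ℝ (Fin d)) (hxt : xt ∈ X)
    (hargmin : ∀ x ∈ X,
      inner ℝ ghat xt + 1 / (2 * γ) * ‖xt - xprev‖ ^ 2 ≤
        inner ℝ ghat x + (1 / (2 * γ) * ‖x - xprev‖ ^ 2 : ℝ)) :
    f xt - f xstar ≤
      (1 - γ * μ) / (2 * γ) * ‖xprev - xstar‖ ^ 2 -
        1 / (2 * γ) * ‖xt - xstar‖ ^ 2 -
        inner ℝ δ (xprev - xstar) + γ / (2 * (1 - γ * L)) * ‖δ‖ ^ 2 :=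
  sgd_one_step_general d f g L μ hsmooth hsc X hconv xstar hxstar xprev δ ghat hghat γ hγ hγL xt hxt
    hargmin
end

section
/- With α_t = 2/(t+1), γ_t = 2/(μ(t+2κ)), κ = L/μ ≥ 1, and weights w_t = 2t/(T(T+1)), the step-size/weight compatibility holds: for every 1 ≤ t ≤ T, w_t·((1−γ_tμ)/(2γ_t)) − w_{t−1}/(2γ_{t−1}) ≤ w_t·L/(2t), where w_0 := 0 and γ_0 := 1. -/
/-! Since `1 / (2γ_t) = μ (t + 2κ) / 4` and `w_t = c t` with `c = 2 / (T (T + 1))`, the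
left-hand side is `c μ (t (t + 2κ - 2) - (t - 1) (t - 1 + 2κ)) / 4 = c μ (2κ - 1) / 4`, independent
of `t` (also for `t = 1`, as `w_0 = 0`), while the right-hand side is `c μ κ / 2`. -/

lemma div_two_mul_two_div (x a : ℝ) : x / (2 * (2 / a)) = x * a / 4 := by
  rw [mul_div_assoc', div_div_eq_mul_div]
  norm_num

lemma one_sub_mul_div_two_mul_two_div {μ x : ℝ} (h : μ * x ≠ 0) :
    (1 - 2 / (μ * x) * μ) / (2 * (2 / (μ * x))) = μ * (x - 2) / 4 := by
  have hμ : μ ≠ 0 := left_ne_zero_of_mul h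
  have hx : x ≠ 0 := right_ne_zero_of_mul h
  field_simp
  ring

lemma linear_weight_step_gap_le {c μ κ s : ℝ} (hc : 0 ≤ c) (hμ : 0 < μ) (hs : 0 < s)
    (hsκ : 0 < s + 2 * κ) :
    c * s * ((1 - 2 / (μ * (s + 2 * κ)) * μ) / (2 * (2 / (μ * (s + 2 * κ)))))
        - c * (s - 1) * (μ * (s - 1 + 2 * κ)) / 4 ≤
      c * s * (μ * κ) / (2 * s) := by
  rw [one_sub_mul_div_two_mul_two_div (by positivity)]
  calc _ = c * μ * (2 * κ - 1) / 4 := by ring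
    _ ≤ c * μ * κ / 2 := by nlinarith [mul_nonneg hc hμ.le]
    _ = c * s * (μ * κ) / (2 * s) := by field_simp

theorem step_weight_compat_general (μ L : ℝ) (hμ : 0 < μ) (hL : μ ≤ L)
    (κ : ℝ) (hκ : κ = L / μ) (T : ℕ)
    (w γ : ℕ → ℝ) (hw0 : w 0 = 0)
    (hw : ∀ t : ℕ, 1 ≤ t → w t = 2 * (t : ℝ) / ((T : ℝ) * ((T : ℝ) + 1)))
    (hγ : ∀ t : ℕ, 1 ≤ t → γ t = 2 / (μ * ((t : ℝ) + 2 * κ))) :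
    ∀ t : ℕ, 1 ≤ t → t ≤ T →
      w t * ((1 - γ t * μ) / (2 * γ t)) - w (t - 1) / (2 * γ (t - 1)) ≤
        w t * L / (2 * (t : ℝ)) := by
  intro t ht _
  set c : ℝ := 2 / ((T : ℝ) * ((T : ℝ) + 1))
  have hw_lin : ∀ s : ℕ, w s = c * s := by
    intro s
    rcases Nat.eq_zero_or_pos s with rfl | hs
    · simp [hw0]
    · rw [hw s hs]; ring
  have hκ1 : 1 ≤ κ := by rw [hκ, le_div_iff₀ hμ]; linarith
  have hLκ : L = μ * κ := by rw [hκ]; field_simp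
  have ht1 : (1 : ℝ) ≤ t := by exact_mod_cast ht
  have hprev_term :
      w (t - 1) / (2 * γ (t - 1)) = c * ((t : ℝ) - 1) * (μ * ((t : ℝ) - 1 + 2 * κ)) / 4 := by
    rcases Nat.lt_or_ge 1 t with h | h
    · rw [hγ (t - 1) (by omega), div_two_mul_two_div, hw_lin, Nat.cast_sub ht]; ring
    · obtain rfl : t = 1 := by omega
      simp [hw0]
  rw [hprev_term, hw_lin, hγ t ht, hLκ]
  exact linear_weight_step_gap_le (by positivity) hμ (by linarith) (by linarith)

theorem step_weight_compat (μ L : ℝ) (hμ : 0 < μ) (hL : μ ≤ L)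
    (κ : ℝ) (hκ : κ = L / μ) (T : ℕ) (hT : 1 ≤ T)
    (w γ : ℕ → ℝ) (hw0 : w 0 = 0) (hγ0 : γ 0 = 1)
    (hw : ∀ t : ℕ, 1 ≤ t → w t = 2 * (t : ℝ) / ((T : ℝ) * ((T : ℝ) + 1)))
    (hγ : ∀ t : ℕ, 1 ≤ t → γ t = 2 / (μ * ((t : ℝ) + 2 * κ))) :
    ∀ t : ℕ, 1 ≤ t → t ≤ T →
      w t * ((1 - γ t * μ) / (2 * γ t)) - w (t - 1) / (2 * γ (t - 1)) ≤
        w t * L / (2 * (t : ℝ)) :=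
  step_weight_compat_general μ L hμ hL κ hκ T w γ hw0 hw hγ
end
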